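/- arXiv:1810.11439 — 3 statements merged into one kernel-verified Lean document; each statement's English description precedes it below -/
import Mathlib

section
/- Let N ≥ 1, 1<p≤q<∞, let p' satisfy 1/p + 1/p' = 1, and let W and U be positive measurable functions on ℝ^N. Suppose there is a constant C₂>0 such that for every measurable f ≥ 0 on ℝ^N: (∫_{ℝ^N} (∫_{‖y‖>‖x‖} f(y) dy)^q W(x) dx)^{1/q} ≤ C₂ (∫_{ℝ^N} f(x)^p U(x) dx)^{1/p}. Then A₂ := sup_{R>0} (∫_{‖x‖<R} W(x) dx)^{1/q} (∫_{‖x‖>R} U(x)^{1−p'} dx)^{1/p'} is finite and satisfies A₂ ≤ C₂. -/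
open MeasureTheory Real
open scoped ENNReal NNReal

/-- Necessity part of the dual two-weight integral Hardy inequality: if
`(∫ (∫_{‖y‖>‖x‖} f)^q W)^{1/q} ≤ C₂ (∫ f^p U)^{1/p}` for all measurable `f ≥ 0`,
then `A₂ := sup_{R>0} (∫_{‖x‖<R} W)^{1/q} (∫_{‖x‖>R} U^{1-p'})^{1/p'} ≤ C₂`
(in particular `A₂` is finite). -/
theorem integral_hardy_dual_necessity
    (N : ℕ) (hN : 1 ≤ N) (p q p' : ℝ) (hp : 1 < p) (hpq : p ≤ q)
    (hp' : 1 / p + 1 / p' = 1)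
    (W U : EuclideanSpace ℝ (Fin N) → ℝ)
    (hWpos : ∀ x, 0 < W x) (hUpos : ∀ x, 0 < U x)
    (hWm : Measurable W) (hUm : Measurable U)
    (C₂ : ℝ) (hC₂ : 0 < C₂)
    (hineq : ∀ f : EuclideanSpace ℝ (Fin N) → ℝ, Measurable f → (∀ x, 0 ≤ f x) →
      (∫⁻ x, (∫⁻ y in {y : EuclideanSpace ℝ (Fin N) | ‖x‖ < ‖y‖},
            ENNReal.ofReal (f y)) ^ q * ENNReal.ofReal (W x)) ^ (1 / q)
        ≤ ENNReal.ofReal C₂ *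
          (∫⁻ x, ENNReal.ofReal (f x ^ p) * ENNReal.ofReal (U x)) ^ (1 / p)) :
    (⨆ (R : ℝ) (_ : 0 < R),
        (∫⁻ x in {x : EuclideanSpace ℝ (Fin N) | ‖x‖ < R}, ENNReal.ofReal (W x)) ^ (1 / q) *
        (∫⁻ x in {x : EuclideanSpace ℝ (Fin N) | R < ‖x‖},
            ENNReal.ofReal (U x ^ (1 - p'))) ^ (1 / p'))
      ≤ ENNReal.ofReal C₂ := by
  have hp0 : 0 < p := lt_trans one_pos hp
  have hq0 : 0 < q := lt_of_lt_of_le hp0 hpq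
  have hip1 : 1 / p < 1 := by rw [div_lt_one hp0]; exact hp
  have hip0 : 0 < 1 / p := by positivity
  have hip' : 1 / p' = 1 - 1 / p := by linarith
  have hip'0 : 0 < 1 / p' := by rw [hip']; linarith
  have hp'0 : 0 < p' := one_div_pos.mp hip'0
  have hkey : (1 - p') * (p - 1) = -1 := by
    have h1 : p' + p = p * p' := by
      field_simp at hp'
      linarith
    nlinarith [h1]
  apply iSup₂_le
  intro R hR
  set S : Set (EuclideanSpace ℝ (Fin N)) := {y : EuclideanSpace ℝ (Fin N) | R < ‖y‖} with hSdef
  have hSm : MeasurableSet S := measurableSet_lt measurable_const measurable_norm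
  set ball : Set (EuclideanSpace ℝ (Fin N)) := {x : EuclideanSpace ℝ (Fin N) | ‖x‖ < R} with hballdef
  have hballm : MeasurableSet ball := measurableSet_lt measurable_norm measurable_const
  set a : ℝ≥0∞ := (∫⁻ x in ball, ENNReal.ofReal (W x)) ^ (1 / q) with hadef
  -- the truncated test functions
  set f : ℕ → EuclideanSpace ℝ (Fin N) → ℝ :=
    fun n y => if R < ‖y‖ ∧ ‖y‖ ≤ (n : ℝ) then min (U y ^ (1 - p')) (n : ℝ) else 0 with hfdef
  have hfnn : ∀ n y, 0 ≤ f n y := by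
    intro n y
    simp only [hfdef]
    split
    · exact le_min (Real.rpow_nonneg (hUpos y).le _) (Nat.cast_nonneg n)
    · exact le_rfl
  have hfm : ∀ n, Measurable (f n) := by
    intro n
    apply Measurable.ite
    · exact (measurableSet_lt measurable_const measurable_norm).inter
        (measurableSet_le measurable_norm measurable_const)
    · exact (hUm.pow_const _).min measurable_const
    · exact measurable_const
  have hfleU : ∀ n y, f n y ≤ U y ^ (1 - p') := by
    intro n y
    simp only [hfdef]
    split
    · exact min_le_left _ _
    · exact Real.rpow_nonneg (hUpos y).le _
  have hf0 : ∀ n y, y ∉ S → f n y = 0 := by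
    intro n y hy
    simp only [hfdef, if_neg (fun h : R < ‖y‖ ∧ ‖y‖ ≤ (n:ℝ) => hy h.1)]
  have hflen : ∀ n y, f n y ≤ (n : ℝ) := by
    intro n y
    simp only [hfdef]
    split
    · exact min_le_right _ _
    · exact Nat.cast_nonneg n
  set B : ℕ → ℝ≥0∞ := fun n => ∫⁻ y in S, ENNReal.ofReal (f n y) with hBdef
  have hBfin : ∀ n, B n < ⊤ := by
    intro n
    have h1 : B n ≤ ∫⁻ y, (Metric.closedBall (0 : EuclideanSpace ℝ (Fin N)) n).indicator
        (fun _ => (n : ℝ≥0∞)) y := by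
      refine le_trans (setLIntegral_le_lintegral _ _) (lintegral_mono fun y => ?_)
      by_cases hy : y ∈ Metric.closedBall (0 : EuclideanSpace ℝ (Fin N)) n
      · rw [Set.indicator_of_mem hy]
        calc ENNReal.ofReal (f n y) ≤ ENNReal.ofReal (n : ℝ) :=
              ENNReal.ofReal_le_ofReal (hflen n y)
          _ = (n : ℝ≥0∞) := ENNReal.ofReal_natCast n
      · rw [Set.indicator_of_notMem hy]
        have hny : ¬ ‖y‖ ≤ (n : ℝ) := by
          rw [Metric.mem_closedBall, dist_zero_right] at hy
          exact hy
        simp only [hfdef, if_neg (fun h : R < ‖y‖ ∧ ‖y‖ ≤ (n:ℝ) => hny h.2), ENNReal.ofReal_zero, le_refl]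
    rw [lintegral_indicator measurableSet_closedBall,
      setLIntegral_const] at h1
    refine lt_of_le_of_lt h1 (ENNReal.mul_lt_top (ENNReal.natCast_lt_top n) ?_)
    exact measure_closedBall_lt_top
  -- pointwise bound for the right-hand side
  have hfpU : ∀ n x, f n x ^ p * U x ≤ f n x := by
    intro n x
    rcases eq_or_lt_of_le (hfnn n x) with h0 | h0
    · rw [← h0, Real.zero_rpow hp0.ne', zero_mul]
    · have h1 : f n x ^ (p - 1) ≤ (U x ^ (1 - p')) ^ (p - 1) :=
        Real.rpow_le_rpow (hfnn n x) (hfleU n x) (by linarith)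
      have h2 : (U x ^ (1 - p')) ^ (p - 1) = (U x)⁻¹ := by
        rw [← Real.rpow_mul (hUpos x).le, hkey, Real.rpow_neg_one]
      have h3 : f n x ^ p = f n x ^ (p - 1) * f n x := by
        have h4 := Real.rpow_add h0 (p - 1) 1
        rw [Real.rpow_one] at h4
        simpa [sub_add_cancel] using h4
      rw [h3]
      calc f n x ^ (p - 1) * f n x * U x ≤ (U x)⁻¹ * f n x * U x := by
            apply mul_le_mul_of_nonneg_right _ (hUpos x).le
            exact mul_le_mul_of_nonneg_right (h2 ▸ h1) h0.le
        _ = f n x := by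
            rw [mul_comm ((U x)⁻¹) (f n x), mul_assoc, inv_mul_cancel₀ (hUpos x).ne', mul_one]
  -- key estimate for each n
  have hkeyn : ∀ n, a * (B n) ^ (1 / p') ≤ ENNReal.ofReal C₂ := by
    intro n
    rcases eq_or_ne (B n) 0 with hB0 | hB0
    · rw [hB0, ENNReal.zero_rpow_of_pos hip'0, mul_zero]
      exact zero_le
    have hBt := (hBfin n).ne
    have H := hineq (f n) (hfm n) (hfnn n)
    -- lower bound for the LHS of H
    have hL : B n * a ≤ (∫⁻ x, (∫⁻ y in {y : EuclideanSpace ℝ (Fin N) | ‖x‖ < ‖y‖},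
        ENNReal.ofReal (f n y)) ^ q * ENNReal.ofReal (W x)) ^ (1 / q) := by
      have h1 : (B n) ^ q * ∫⁻ x in ball, ENNReal.ofReal (W x)
          ≤ ∫⁻ x, (∫⁻ y in {y : EuclideanSpace ℝ (Fin N) | ‖x‖ < ‖y‖},
            ENNReal.ofReal (f n y)) ^ q * ENNReal.ofReal (W x) := by
        rw [← lintegral_const_mul _ hWm.ennreal_ofReal]
        refine le_trans (setLIntegral_mono' hballm fun x hx => ?_)
          (setLIntegral_le_lintegral _ _)
        have hx' : ‖x‖ < R := hx
        have hsub : S ⊆ {y : EuclideanSpace ℝ (Fin N) | ‖x‖ < ‖y‖} := by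
          intro y hy
          exact lt_trans hx' hy
        exact mul_le_mul_left (ENNReal.rpow_le_rpow (lintegral_mono_set hsub) hq0.le) _
      calc B n * a = ((B n) ^ q * ∫⁻ x in ball, ENNReal.ofReal (W x)) ^ (1 / q) := by
            rw [ENNReal.mul_rpow_of_nonneg _ _ (by positivity : (0:ℝ) ≤ 1/q),
              ← ENNReal.rpow_mul, mul_one_div_cancel hq0.ne', ENNReal.rpow_one]
        _ ≤ _ := ENNReal.rpow_le_rpow h1 (by positivity)
    -- upper bound for the RHS of H
    have hR' : (∫⁻ x, ENNReal.ofReal (f n x ^ p) * ENNReal.ofReal (U x)) ≤ B n := by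
      have h2 : ∀ x, ENNReal.ofReal (f n x ^ p) * ENNReal.ofReal (U x)
          ≤ S.indicator (fun y => ENNReal.ofReal (f n y)) x := by
        intro x
        by_cases hx : x ∈ S
        · rw [Set.indicator_of_mem hx, ← ENNReal.ofReal_mul (Real.rpow_nonneg (hfnn n x) _)]
          exact ENNReal.ofReal_le_ofReal (hfpU n x)
        · rw [Set.indicator_of_notMem hx, hf0 n x hx, Real.zero_rpow hp0.ne',
            ENNReal.ofReal_zero, zero_mul]
      calc (∫⁻ x, ENNReal.ofReal (f n x ^ p) * ENNReal.ofReal (U x))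
          ≤ ∫⁻ x, S.indicator (fun y => ENNReal.ofReal (f n y)) x := lintegral_mono h2
        _ = B n := by rw [lintegral_indicator hSm]
    have hmain : B n * a ≤ ENNReal.ofReal C₂ * (B n) ^ (1 / p) := by
      refine le_trans hL (le_trans H ?_)
      exact mul_le_mul_right (ENNReal.rpow_le_rpow hR' hip0.le) _
    -- divide by (B n)^(1/p)
    have hsplit : a * (B n) ^ (1 / p') = (B n * a) * (B n) ^ (-(1 / p)) := by
      rw [hip', show (1 : ℝ) - 1 / p = 1 + -(1/p) by ring,
        ENNReal.rpow_add _ _ hB0 hBt, ENNReal.rpow_one]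
      ring
    rw [hsplit]
    calc (B n * a) * (B n) ^ (-(1 / p))
        ≤ (ENNReal.ofReal C₂ * (B n) ^ (1 / p)) * (B n) ^ (-(1 / p)) :=
          mul_le_mul_left hmain _
      _ = ENNReal.ofReal C₂ := by
          rw [mul_assoc, ← ENNReal.rpow_add _ _ hB0 hBt]
          simp
  -- monotone convergence
  have hmono : Monotone fun n => fun y => ENNReal.ofReal (f n y) := by
    intro m n hmn
    intro y
    apply ENNReal.ofReal_le_ofReal
    simp only [hfdef]
    split
    · rename_i h
      rw [if_pos ⟨h.1, le_trans h.2 (Nat.cast_le.mpr hmn)⟩]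
      exact min_le_min le_rfl (Nat.cast_le.mpr hmn)
    · exact hfnn n y
  have hBsup : (∫⁻ x in S, ENNReal.ofReal (U x ^ (1 - p'))) = ⨆ n, B n := by
    rw [← lintegral_iSup (fun n => (hfm n).ennreal_ofReal) hmono]
    refine setLIntegral_congr_fun hSm (fun y hy => ?_)
    apply le_antisymm
    · obtain ⟨n, hn⟩ := exists_nat_ge (max ‖y‖ (U y ^ (1 - p')))
      have hy' : R < ‖y‖ := hy
      have h1 : f n y = U y ^ (1 - p') := by
        have hcond : R < ‖y‖ ∧ ‖y‖ ≤ (n : ℝ) := ⟨hy', le_trans (le_max_left _ _) hn⟩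
        simp only [hfdef]
        rw [if_pos hcond]
        exact min_eq_left (le_trans (le_max_right _ _) hn)
      rw [← h1]
      exact le_iSup (fun n => ENNReal.ofReal (f n y)) n
    · exact iSup_le fun n => ENNReal.ofReal_le_ofReal (hfleU n y)
  rw [hBsup]
  have hiso : (⨆ n, B n) ^ (1 / p') = ⨆ n, (B n) ^ (1 / p') := by
    exact OrderIso.map_iSup (ENNReal.orderIsoRpow (1 / p') hip'0) B
  rw [hiso, ENNReal.mul_iSup]
  exact iSup_le hkeyn
end

section
/- Let N ≥ 1, 1<p≤q<∞, let p' satisfy 1/p + 1/p' = 1, let 0<λ<N, and let real numbers α, β satisfy α < N/p', (β+λ)q > N, and 1/q = 1/p + (α+β+λ)/N − 1. Then there exists a constant C>0, independent of u, such that for every measurable u ≥ 0 on ℝ^N: (∫_{ℝ^N} (∫_{‖y‖ ≤ ‖x‖/2} u(y) dy)^q ‖x‖^{−(β+λ)q} dx)^{1/q} ≤ C (∫_{ℝ^N} u(x)^p ‖x‖^{αp} dx)^{1/p}. -/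
open MeasureTheory Real

open Set
open scoped ENNReal NNReal

private lemma my_tsum_rpow_le {ι : Type*} (f : ι → ℝ≥0∞) {r : ℝ} (hr : 1 ≤ r) :
    ∑' i, f i ^ r ≤ (∑' i, f i) ^ r := by
  have hr0 : (0:ℝ) < r := lt_of_lt_of_le one_pos hr
  by_cases hS : (∑' i, f i) = ∞
  · rw [hS, ENNReal.top_rpow_of_pos hr0]; exact le_top
  have h1 : ∀ i, f i ^ r ≤ f i * (∑' j, f j) ^ (r - 1) := by
    intro i
    by_cases hfi : f i = 0
    · simp [hfi, ENNReal.zero_rpow_of_pos hr0]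
    · have hfi' : f i ≠ ∞ := ne_top_of_le_ne_top hS (ENNReal.le_tsum i)
      calc f i ^ r = f i ^ ((1:ℝ) + (r-1)) := by ring_nf
        _ = f i ^ (1:ℝ) * f i ^ (r-1) := ENNReal.rpow_add _ _ hfi hfi'
        _ ≤ f i * (∑' j, f j) ^ (r-1) := by
            rw [ENNReal.rpow_one]
            exact mul_le_mul_right (ENNReal.rpow_le_rpow (ENNReal.le_tsum i) (by linarith)) _
  calc ∑' i, f i ^ r ≤ ∑' i, f i * (∑' j, f j) ^ (r-1) := ENNReal.tsum_le_tsum h1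
    _ = (∑' j, f j) * (∑' j, f j) ^ (r-1) := ENNReal.tsum_mul_right
    _ = (∑' j, f j) ^ r := by
        by_cases h0 : (∑' j, f j) = 0
        · rcases eq_or_lt_of_le hr with h | h
          · simp [h0, ← h]
          · rw [h0, ENNReal.zero_rpow_of_pos hr0, ENNReal.zero_rpow_of_pos (by linarith), mul_zero]
        · rw [show r = 1+(r-1) by ring, ENNReal.rpow_add _ _ h0 hS, ENNReal.rpow_one]; ring_nf

private lemma my_tsum_holder {p q : ℝ} (hpq : p.HolderConjugate q) (f g : ℕ → ℝ≥0∞) :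
    ∑' n, f n * g n ≤ (∑' n, f n ^ p) ^ (1/p) * (∑' n, g n ^ q) ^ (1/q) := by
  have := ENNReal.lintegral_mul_le_Lp_mul_Lq (Measure.count : Measure ℕ) hpq
      (f := f) (g := g) (measurable_of_countable f).aemeasurable
      (measurable_of_countable g).aemeasurable
  simpa [lintegral_count] using this

set_option maxHeartbeats 1000000 in
/-- Power-weight Hardy inequality for the inner region:
`(∫ (∫_{‖y‖≤‖x‖/2} u(y) dy)^q ‖x‖^{-(β+λ)q} dx)^{1/q} ≤ C (∫ u^p ‖x‖^{αp})^{1/p}`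
when `1 < p ≤ q < ∞`, `0 < λ < N`, `α < N/p'`, `(β+λ)q > N` and
`1/q = 1/p + (α+β+λ)/N - 1`. -/
theorem hardy_inner_region
    (N : ℕ) (hN : 1 ≤ N) (p q p' lam α β : ℝ)
    (hp : 1 < p) (hpq : p ≤ q) (hp' : 1 / p + 1 / p' = 1)
    (hlam0 : 0 < lam) (hlamN : lam < N)
    (hα : α < N / p') (hbetalam : (N : ℝ) < (β + lam) * q)
    (hscal : 1 / q = 1 / p + (α + β + lam) / N - 1) :
    ∃ C : ℝ, 0 < C ∧ ∀ u : EuclideanSpace ℝ (Fin N) → ℝ,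
      Measurable u → (∀ x, 0 ≤ u x) →
      (∫⁻ (x : EuclideanSpace ℝ (Fin N)), (∫⁻ y in {y : EuclideanSpace ℝ (Fin N) | ‖y‖ ≤ ‖x‖ / 2},
            ENNReal.ofReal (u y)) ^ q *
          ENNReal.ofReal (‖x‖ ^ (-((β + lam) * q)))) ^ (1 / q)
        ≤ ENNReal.ofReal C *
          (∫⁻ x, ENNReal.ofReal (u x ^ p) * ENNReal.ofReal (‖x‖ ^ (α * p))) ^ (1 / p) := by
  -- ## arithmetic preliminaries
  have hp0 : (0:ℝ) < p := lt_trans one_pos hp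
  have hq0 : (0:ℝ) < q := lt_of_lt_of_le hp0 hpq
  have hNpos : (0:ℝ) < (N:ℝ) := by exact_mod_cast Nat.pos_of_ne_zero (by omega)
  have hinvp : 1/p < 1 := by rw [div_lt_one hp0]; exact hp
  have hp'inv : 1/p' = 1 - 1/p := by linarith
  have hp'pos : (0:ℝ) < p' := by
    have h1 : 0 < 1/p' := by rw [hp'inv]; linarith
    exact one_div_pos.mp h1
  have hconj : p.HolderConjugate p' := Real.holderConjugate_iff.mpr ⟨hp, by rw [← one_div, ← one_div]; exact hp'⟩
  set δ : ℝ := (N:ℝ) * (1 - 1/p) - α with hδdef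
  have hδpos : 0 < δ := by
    have h2 : α < (N:ℝ) * (1/p') := by
      have : (N:ℝ)/p' = (N:ℝ) * (1/p') := by ring
      rw [← this]; exact hα
    rw [hp'inv] at h2
    simp only [hδdef]; linarith
  have hδp' : δ * p' = (N:ℝ) - α * p' := by
    have h1 : (1 - 1/p) * p' = 1 := by
      rw [← hp'inv]; field_simp
    calc δ * p' = (N:ℝ) * ((1-1/p)*p') - α*p' := by rw [hδdef]; ring
      _ = (N:ℝ) - α*p' := by rw [h1]; ring
  have hsum : α+β+lam = (1/q - 1/p + 1) * (N:ℝ) := by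
    have h2 : (α+β+lam)/(N:ℝ) = 1/q - 1/p + 1 := by linarith
    exact (div_eq_iff hNpos.ne').mp h2
  have hq1 : (1/q)*q = 1 := by field_simp
  have hδq : -((β+lam)*q) + (N:ℝ) = -(δ*q) := by
    rw [hδdef]; nlinarith [hsum, hq1]
  have hqp1 : (1:ℝ) ≤ (1/p)*q := by
    rw [one_div, inv_mul_eq_div, le_div_iff₀ hp0, one_mul]; exact hpq
  -- ## geometry: dyadic annuli
  haveI : Nonempty (Fin N) := ⟨⟨0, by omega⟩⟩
  haveI : Nontrivial (EuclideanSpace ℝ (Fin N)) := by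
    apply Module.nontrivial_of_finrank_pos (R := ℝ)
    rw [finrank_euclideanSpace_fin]; omega
  set r : ℤ → ℝ := fun k => (2:ℝ) ^ (k:ℝ) with hrdef
  have hrpos : ∀ k, 0 < r k := fun k => Real.rpow_pos_of_pos two_pos _
  have hrmono : ∀ {j k : ℤ}, j ≤ k → r j ≤ r k := by
    intro j k h
    exact Real.rpow_le_rpow_of_exponent_le one_le_two (by exact_mod_cast h)
  have hr2 : ∀ k, r (k+1) = 2 * r k := by
    intro k
    show (2:ℝ) ^ (((k+1:ℤ)):ℝ) = 2 * (2:ℝ) ^ ((k:ℤ):ℝ)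
    rw [show (((k+1:ℤ)):ℝ) = ((k:ℤ):ℝ) + 1 by push_cast; ring,
      Real.rpow_add two_pos, Real.rpow_one]
    ring
  set A : ℤ → Set (EuclideanSpace ℝ (Fin N)) :=
    fun k => {x | r k ≤ ‖x‖ ∧ ‖x‖ < r (k+1)} with hAdef
  have hAm : ∀ k, MeasurableSet (A k) := fun k =>
    (measurableSet_le measurable_const measurable_norm).inter
      (measurableSet_lt measurable_norm measurable_const)
  have hdisj : Pairwise (Function.onFun Disjoint A) := by
    have key : ∀ j k : ℤ, j < k → Disjoint (A j) (A k) := by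
      intro j k hjk
      rw [Set.disjoint_left]
      rintro x ⟨-, h2⟩ ⟨h3, -⟩
      have : r (j+1) ≤ r k := hrmono (by omega)
      linarith
    intro j k hjk
    rcases lt_or_gt_of_ne hjk with h | h
    · exact key _ _ h
    · exact (key _ _ h).symm
  have hcov : ∀ x : EuclideanSpace ℝ (Fin N), x ≠ 0 → ∃ k, x ∈ A k := by
    intro x hx
    have hx0 : 0 < ‖x‖ := norm_pos_iff.mpr hx
    obtain ⟨k, hk1, hk2⟩ := exists_mem_Ico_zpow hx0 one_lt_two
    refine ⟨k, ?_, ?_⟩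
    · rw [show r k = (2:ℝ)^k from Real.rpow_intCast 2 k]; exact hk1
    · rw [show r (k+1) = (2:ℝ)^(k+1) from Real.rpow_intCast 2 (k+1)]; exact hk2
  have h0 : volume ({0} : Set (EuclideanSpace ℝ (Fin N))) = 0 := measure_singleton 0
  -- splitting of lintegrals over annuli
  have hsplit : ∀ (f : EuclideanSpace ℝ (Fin N) → ℝ≥0∞),
      ∫⁻ x, f x = ∑' k : ℤ, ∫⁻ x in A k, f x := by
    intro f
    have huniv : (Set.univ : Set (EuclideanSpace ℝ (Fin N))) =ᵐ[volume] ⋃ k : ℤ, A k := by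
      rw [MeasureTheory.ae_eq_set]
      constructor
      · apply measure_mono_null _ h0
        intro x hx
        obtain ⟨-, hx2⟩ := hx
        by_contra hx0
        obtain ⟨k, hk⟩ := hcov x hx0
        exact hx2 (Set.mem_iUnion.mpr ⟨k, hk⟩)
      · rw [Set.diff_univ]; exact measure_empty
    rw [← setLIntegral_univ f, Measure.restrict_congr_set huniv,
      lintegral_iUnion hAm hdisj]
  have hballs : ∀ k : ℤ,
      {y : EuclideanSpace ℝ (Fin N) | ‖y‖ < r k} =ᵐ[volume] ⋃ n : ℕ, A (k-1-n) := by
    intro k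
    rw [MeasureTheory.ae_eq_set]
    constructor
    · apply measure_mono_null _ h0
      intro y hy
      obtain ⟨hy1, hy2⟩ := hy
      by_contra hy0
      obtain ⟨j, hj⟩ := hcov y hy0
      have hjk : j < k := by
        by_contra hc
        push_neg at hc
        exact absurd (hrmono hc) (not_le.mpr (lt_of_le_of_lt hj.1 hy1))
      refine hy2 (Set.mem_iUnion.mpr ⟨(k-1-j).toNat, ?_⟩)
      have : (k - 1 - (((k-1-j).toNat : ℤ))) = j := by
        rw [Int.toNat_of_nonneg (by omega)]; ring
      rw [this]; exact hj
    · have : (⋃ n : ℕ, A (k-1-n)) \ {y : EuclideanSpace ℝ (Fin N) | ‖y‖ < r k} = ∅ := by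
        rw [Set.diff_eq_empty]
        intro y hy
        obtain ⟨n, hn⟩ := Set.mem_iUnion.mp hy
        show ‖y‖ < r k
        calc ‖y‖ < r (k-1-n+1) := hn.2
          _ ≤ r k := hrmono (by omega)
      rw [this]; exact measure_empty
  -- ## constants
  set B : ℝ≥0∞ := volume (Metric.ball (0 : EuclideanSpace ℝ (Fin N)) 1) with hBdef
  have hBne : B ≠ ∞ := measure_ball_lt_top.ne
  -- annulus integral of a power weight
  have hw : ∀ (s : ℝ) (k : ℤ), (∫⁻ x in A k, ENNReal.ofReal (‖x‖ ^ s))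
      ≤ ENNReal.ofReal ((max 1 ((2:ℝ)^s) * 2^(N:ℝ)) * (r k)^(s + (N:ℝ))) * B := by
    intro s k
    have hc0 : (0:ℝ) ≤ max 1 ((2:ℝ)^s) * (r k)^s := by positivity
    calc (∫⁻ x in A k, ENNReal.ofReal (‖x‖^s))
        ≤ ∫⁻ _ in A k, ENNReal.ofReal (max 1 ((2:ℝ)^s) * (r k)^s) := by
          apply setLIntegral_mono' (hAm k)
          intro x hx
          obtain ⟨h1, h2⟩ := hx
          apply ENNReal.ofReal_le_ofReal
          rcases le_or_gt 0 s with hs | hs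
          · calc ‖x‖^s ≤ (r (k+1))^s :=
                  Real.rpow_le_rpow (norm_nonneg x) h2.le hs
              _ = (2:ℝ)^s * (r k)^s := by
                  rw [hr2, Real.mul_rpow (by norm_num) (hrpos k).le]
              _ ≤ max 1 ((2:ℝ)^s) * (r k)^s :=
                  mul_le_mul_of_nonneg_right (le_max_right _ _)
                    (Real.rpow_nonneg (hrpos k).le s)
          · calc ‖x‖^s ≤ (r k)^s := by
                  apply Real.rpow_le_rpow_of_nonpos (hrpos k) h1 hs.le
              _ ≤ max 1 ((2:ℝ)^s) * (r k)^s := by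
                  nth_rewrite 1 [← one_mul ((r k)^s)]
                  exact mul_le_mul_of_nonneg_right (le_max_left _ _)
                    (Real.rpow_nonneg (hrpos k).le s)
      _ = ENNReal.ofReal (max 1 ((2:ℝ)^s) * (r k)^s) * volume (A k) :=
          setLIntegral_const _ _
      _ ≤ ENNReal.ofReal (max 1 ((2:ℝ)^s) * (r k)^s) *
            volume (Metric.ball (0 : EuclideanSpace ℝ (Fin N)) (2 * r k)) := by
          apply mul_le_mul_right
          apply measure_mono
          intro x hx
          rw [Metric.mem_ball, dist_zero_right]
          calc ‖x‖ < r (k+1) := hx.2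
            _ = 2 * r k := hr2 k
      _ = ENNReal.ofReal ((max 1 ((2:ℝ)^s) * 2^(N:ℝ)) * (r k)^(s + (N:ℝ))) * B := by
          rw [Measure.addHaar_ball_of_pos _ _ (by positivity), ← mul_assoc,
            finrank_euclideanSpace_fin, ← ENNReal.ofReal_mul hc0]
          congr 2
          rw [mul_pow, ← Real.rpow_natCast (2:ℝ) N, ← Real.rpow_natCast (r k) N,
            Real.rpow_add (hrpos k)]
          ring
  set c₁ : ℝ := max 1 ((2:ℝ)^(-(α*p'))) * 2^(N:ℝ) with hc₁
  set c₂ : ℝ := max 1 ((2:ℝ)^(-((β+lam)*q))) * 2^(N:ℝ) with hc₂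
  have hc₁pos : 0 < c₁ := by rw [hc₁]; positivity
  have hc₂pos : 0 < c₂ := by rw [hc₂]; positivity
  set c₃ : ℝ := c₁ ^ (1/p') with hc₃
  have hc₃pos : 0 < c₃ := by rw [hc₃]; positivity
  set τ : ℝ≥0∞ := ENNReal.ofReal ((2:ℝ)^(-δ)) with hτ
  have hτ0 : τ ≠ 0 := by
    rw [hτ]; simp [ENNReal.ofReal_eq_zero, not_le]; positivity
  have hτtop : τ ≠ ∞ := ENNReal.ofReal_ne_top
  have hτlt1 : τ < 1 := by
    rw [hτ, ← ENNReal.ofReal_one]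
    apply ENNReal.ofReal_lt_ofReal_iff_of_nonneg (by positivity) |>.mpr
    exact Real.rpow_lt_one_of_one_lt_of_neg one_lt_two (by linarith)
  set S : ℝ≥0∞ := ∑' n : ℕ, τ^(n+1) with hSdef
  have hSne : S ≠ ∞ := by
    rw [hSdef]
    have : ∑' n : ℕ, τ^(n+1) = τ * (1 - τ)⁻¹ := ENNReal.tsum_geometric_add_one τ
    rw [this]
    apply ENNReal.mul_ne_top hτtop
    rw [ENNReal.inv_ne_top]
    exact (tsub_pos_iff_lt.mpr hτlt1).ne'
  set B' : ℝ≥0∞ := B ^ (1/p') with hB'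
  have hB'ne : B' ≠ ∞ := ENNReal.rpow_ne_top_of_nonneg (by positivity) hBne
  set K₀ : ℝ≥0∞ := ENNReal.ofReal (c₃^q * c₂) * B'^q * S^((1/p')*q) * B with hK₀
  have hK₀ne : K₀ ≠ ∞ := by
    rw [hK₀]
    apply ENNReal.mul_ne_top
    apply ENNReal.mul_ne_top
    apply ENNReal.mul_ne_top ENNReal.ofReal_ne_top
    · exact ENNReal.rpow_ne_top_of_nonneg (by positivity) hB'ne
    · exact ENNReal.rpow_ne_top_of_nonneg (by positivity) hSne
    · exact hBne
  set K : ℝ≥0∞ := K₀ * S^((1/p)*q) with hK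
  have hKne : K ≠ ∞ := by
    rw [hK]
    exact ENNReal.mul_ne_top hK₀ne (ENNReal.rpow_ne_top_of_nonneg (by positivity) hSne)
  have hKq : K ^ (1/q) ≠ ∞ := ENNReal.rpow_ne_top_of_nonneg (by positivity) hKne
  refine ⟨(K ^ (1/q)).toReal + 1, by positivity, ?_⟩
  intro u hu hu0
  -- ## quantities depending on u
  set Utot : ℝ≥0∞ := ∫⁻ x, ENNReal.ofReal (u x ^ p) * ENNReal.ofReal (‖x‖ ^ (α * p)) with hUtot
  set U : ℤ → ℝ≥0∞ :=
    fun j => ∫⁻ y in A j, ENNReal.ofReal (u y ^ p) * ENNReal.ofReal (‖y‖ ^ (α * p)) with hUdef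
  set T : ℤ → ℝ≥0∞ :=
    fun k => ∫⁻ y in {y : EuclideanSpace ℝ (Fin N) | ‖y‖ < r k}, ENNReal.ofReal (u y) with hTdef
  set W : ℤ → ℝ≥0∞ := fun k => ∑' n : ℕ, τ^(n+1) * U (k-1-(n:ℤ)) with hWdef
  have hUsum : Utot = ∑' j : ℤ, U j := by
    simp only [hUtot, hUdef]
    exact hsplit _
  have hT_eq : ∀ k : ℤ, T k = ∑' n : ℕ, ∫⁻ y in A (k-1-(n:ℤ)), ENNReal.ofReal (u y) := by
    intro k
    simp only [hTdef]
    rw [show (volume.restrict {y : EuclideanSpace ℝ (Fin N) | ‖y‖ < r k})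
        = volume.restrict (⋃ n : ℕ, A (k-1-(n:ℤ))) from Measure.restrict_congr_set (hballs k)]
    have hd : Pairwise (Function.onFun Disjoint (fun n : ℕ => A (k-1-(n:ℤ)))) := by
      intro n m hnm
      exact hdisj (show (k-1-(n:ℤ)) ≠ (k-1-(m:ℤ)) by omega)
    exact lintegral_iUnion (s := fun n : ℕ => A (k-1-(n:ℤ))) (fun n => hAm _) hd
      (fun y => ENNReal.ofReal (u y))
  -- Hoelder estimate on each annulus
  have hHold : ∀ j : ℤ, (∫⁻ y in A j, ENNReal.ofReal (u y))
      ≤ (U j)^(1/p) * (ENNReal.ofReal (c₃ * (r j)^δ) * B') := by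
    intro j
    have hmeasf : AEMeasurable (fun y : EuclideanSpace ℝ (Fin N) => ENNReal.ofReal (u y * ‖y‖^α))
        ((volume).restrict (A j)) :=
      ((hu.mul (measurable_norm.pow_const α)).ennreal_ofReal).aemeasurable
    have hmeasg : AEMeasurable (fun y : EuclideanSpace ℝ (Fin N) => ENNReal.ofReal (‖y‖^(-α)))
        ((volume).restrict (A j)) :=
      ((measurable_norm.pow_const _).ennreal_ofReal).aemeasurable
    have heq : (∫⁻ y in A j, ENNReal.ofReal (u y))
        = ∫⁻ y in A j, (fun y : EuclideanSpace ℝ (Fin N) => ENNReal.ofReal (u y * ‖y‖^α)) y *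
            (fun y : EuclideanSpace ℝ (Fin N) => ENNReal.ofReal (‖y‖^(-α))) y := by
      apply setLIntegral_congr_fun (hAm j)
      intro y hy
      have hy0 : (0:ℝ) < ‖y‖ := lt_of_lt_of_le (hrpos j) hy.1
      beta_reduce
      rw [← ENNReal.ofReal_mul (mul_nonneg (hu0 y) (Real.rpow_nonneg (norm_nonneg y) α)),
        mul_assoc, ← Real.rpow_add hy0, add_neg_cancel, Real.rpow_zero, mul_one]
    rw [heq]
    calc _ ≤ (∫⁻ y in A j, (ENNReal.ofReal (u y * ‖y‖^α))^p) ^ (1/p) *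
          (∫⁻ y in A j, (ENNReal.ofReal (‖y‖^(-α)))^p') ^ (1/p') :=
        ENNReal.lintegral_mul_le_Lp_mul_Lq _ hconj hmeasf hmeasg
      _ ≤ (U j)^(1/p) * (ENNReal.ofReal (c₃ * (r j)^δ) * B') := by
        have hfp : (∫⁻ y in A j, (ENNReal.ofReal (u y * ‖y‖^α))^p) = U j := by
          apply lintegral_congr
          intro y
          rw [ENNReal.ofReal_rpow_of_nonneg
              (mul_nonneg (hu0 y) (Real.rpow_nonneg (norm_nonneg y) α)) hp0.le,
            Real.mul_rpow (hu0 y) (Real.rpow_nonneg (norm_nonneg y) α),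
            ← Real.rpow_mul (norm_nonneg y),
            ENNReal.ofReal_mul (Real.rpow_nonneg (hu0 y) p)]
        have hgp : (∫⁻ y in A j, (ENNReal.ofReal (‖y‖^(-α)))^p')
            = ∫⁻ y in A j, ENNReal.ofReal (‖y‖^(-(α*p'))) := by
          apply lintegral_congr
          intro y
          rw [ENNReal.ofReal_rpow_of_nonneg (Real.rpow_nonneg (norm_nonneg y) _) hp'pos.le,
            ← Real.rpow_mul (norm_nonneg y), neg_mul]
        rw [hfp, hgp]
        apply mul_le_mul_right
        have h1 : (∫⁻ y in A j, ENNReal.ofReal (‖y‖^(-(α*p'))))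
            ≤ ENNReal.ofReal (c₁ * (r j)^(δ*p')) * B := by
          have h2 := hw (-(α*p')) j
          rw [show -(α*p') + (N:ℝ) = δ*p' by linarith [hδp'], ← hc₁] at h2
          exact h2
        calc (∫⁻ y in A j, ENNReal.ofReal (‖y‖^(-(α*p'))))^(1/p')
            ≤ (ENNReal.ofReal (c₁ * (r j)^(δ*p')) * B)^(1/p') :=
              ENNReal.rpow_le_rpow h1 (by positivity)
          _ = ENNReal.ofReal (c₃ * (r j)^δ) * B' := by
              rw [ENNReal.mul_rpow_of_nonneg _ _ (by positivity), ← hB',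
                ENNReal.ofReal_rpow_of_nonneg (by positivity) (by positivity),
                Real.mul_rpow hc₁pos.le (Real.rpow_nonneg (hrpos j).le _),
                ← Real.rpow_mul (hrpos j).le,
                show δ*p'*(1/p') = δ by field_simp, ← hc₃]
  -- dyadic rescaling of the annulus weights
  have hr' : ∀ (k : ℤ) (n : ℕ), (r (k-1-(n:ℤ)))^δ = (r k)^δ * ((2:ℝ)^(-δ))^(n+1) := by
    intro k n
    show ((2:ℝ) ^ (((k-1-(n:ℤ)):ℤ):ℝ))^δ = ((2:ℝ) ^ ((k:ℤ):ℝ))^δ * ((2:ℝ)^(-δ))^(n+1)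
    rw [← Real.rpow_natCast ((2:ℝ)^(-δ)) (n+1), ← Real.rpow_mul (by norm_num : (0:ℝ) ≤ 2),
      ← Real.rpow_mul (by norm_num : (0:ℝ) ≤ 2), ← Real.rpow_mul (by norm_num : (0:ℝ) ≤ 2),
      ← Real.rpow_add two_pos]
    congr 1
    push_cast
    ring
  have step2 : ∀ k : ℤ, T k ≤ ENNReal.ofReal (c₃ * (r k)^δ) * B' * ((W k)^(1/p) * S^(1/p')) := by
    intro k
    rw [hT_eq k]
    calc ∑' n:ℕ, (∫⁻ y in A (k-1-(n:ℤ)), ENNReal.ofReal (u y))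
        ≤ ∑' n:ℕ, (U (k-1-(n:ℤ)))^(1/p) * (ENNReal.ofReal (c₃ * (r (k-1-(n:ℤ)))^δ) * B') :=
          ENNReal.tsum_le_tsum (fun n => hHold _)
      _ = ∑' n:ℕ, (ENNReal.ofReal (c₃ * (r k)^δ) * B') * (τ^(n+1) * (U (k-1-(n:ℤ)))^(1/p)) := by
          apply tsum_congr; intro n
          rw [hr' k n, show c₃ * ((r k)^δ * ((2:ℝ)^(-δ))^(n+1))
              = (c₃ * (r k)^δ) * ((2:ℝ)^(-δ))^(n+1) by ring,
            ENNReal.ofReal_mul (by positivity), ENNReal.ofReal_pow (by positivity), ← hτ]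
          ring
      _ = (ENNReal.ofReal (c₃ * (r k)^δ) * B') * ∑' n:ℕ, τ^(n+1) * (U (k-1-(n:ℤ)))^(1/p) :=
          ENNReal.tsum_mul_left
      _ ≤ (ENNReal.ofReal (c₃ * (r k)^δ) * B') * ((W k)^(1/p) * S^(1/p')) := by
          apply mul_le_mul_right
          -- discrete Hoelder
          have key := my_tsum_holder hconj
            (fun n => τ ^ ((((n:ℝ))+1)/p) * (U (k-1-(n:ℤ)))^(1/p))
            (fun n => τ ^ ((((n:ℝ))+1)/p'))
          have hfg : ∀ n : ℕ, (τ ^ ((((n:ℝ))+1)/p) * (U (k-1-(n:ℤ)))^(1/p)) *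
              τ ^ ((((n:ℝ))+1)/p') = τ^(n+1) * (U (k-1-(n:ℤ)))^(1/p) := by
            intro n
            rw [show (τ ^ ((((n:ℝ))+1)/p) * (U (k-1-(n:ℤ)))^(1/p)) * τ ^ ((((n:ℝ))+1)/p')
                = (τ ^ ((((n:ℝ))+1)/p) * τ ^ ((((n:ℝ))+1)/p')) * (U (k-1-(n:ℤ)))^(1/p) from by ring,
              ← ENNReal.rpow_add _ _ hτ0 hτtop,
              show (((n:ℝ))+1)/p + (((n:ℝ))+1)/p' = (((n:ℝ))+1) by
                rw [show (((n:ℝ))+1)/p + (((n:ℝ))+1)/p' = (((n:ℝ))+1) * (1/p + 1/p') by ring,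
                  hp', mul_one],
              show τ ^ (((n:ℝ))+1) = τ^(n+1) from by
                rw [← ENNReal.rpow_natCast τ (n+1)]; push_cast; ring_nf]
          have hfp : ∀ n : ℕ, (τ ^ ((((n:ℝ))+1)/p) * (U (k-1-(n:ℤ)))^(1/p))^p
              = τ^(n+1) * U (k-1-(n:ℤ)) := by
            intro n
            rw [ENNReal.mul_rpow_of_nonneg _ _ hp0.le, ← ENNReal.rpow_mul,
              ← ENNReal.rpow_mul,
              show (((n:ℝ))+1)/p*p = (((n:ℝ))+1) by field_simp,
              show 1/p*p = (1:ℝ) by field_simp, ENNReal.rpow_one,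
              show τ ^ (((n:ℝ))+1) = τ^(n+1) from by
                rw [← ENNReal.rpow_natCast τ (n+1)]; push_cast; ring_nf]
          have hgp : ∀ n : ℕ, (τ ^ ((((n:ℝ))+1)/p'))^p' = τ^(n+1) := by
            intro n
            rw [← ENNReal.rpow_mul,
              show (((n:ℝ))+1)/p'*p' = (((n:ℝ))+1) by field_simp,
              show τ ^ (((n:ℝ))+1) = τ^(n+1) from by
                rw [← ENNReal.rpow_natCast τ (n+1)]; push_cast; ring_nf]
          calc ∑' n:ℕ, τ^(n+1) * (U (k-1-(n:ℤ)))^(1/p)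
              = ∑' n:ℕ, (τ ^ ((((n:ℝ))+1)/p) * (U (k-1-(n:ℤ)))^(1/p)) *
                  τ ^ ((((n:ℝ))+1)/p') := by
                apply tsum_congr; intro n; rw [hfg n]
            _ ≤ (∑' n:ℕ, (τ ^ ((((n:ℝ))+1)/p) * (U (k-1-(n:ℤ)))^(1/p))^p)^(1/p) *
                  (∑' n:ℕ, (τ ^ ((((n:ℝ))+1)/p'))^p')^(1/p') := key
            _ = (W k)^(1/p) * S^(1/p') := by
                congr 2
                · rw [hWdef]; exact tsum_congr hfp
                · rw [hSdef]; exact tsum_congr hgp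
  -- weight integral on each annulus, outer estimate
  have step1 : ∀ k : ℤ, (∫⁻ x in A k,
        (∫⁻ y in {y : EuclideanSpace ℝ (Fin N) | ‖y‖ ≤ ‖x‖ / 2}, ENNReal.ofReal (u y)) ^ q *
          ENNReal.ofReal (‖x‖ ^ (-((β + lam) * q))))
      ≤ (T k)^q * (ENNReal.ofReal (c₂ * (r k)^(-(δ*q))) * B) := by
    intro k
    calc (∫⁻ x in A k,
          (∫⁻ y in {y : EuclideanSpace ℝ (Fin N) | ‖y‖ ≤ ‖x‖ / 2}, ENNReal.ofReal (u y)) ^ q *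
            ENNReal.ofReal (‖x‖ ^ (-((β + lam) * q))))
        ≤ ∫⁻ x in A k, (T k)^q * ENNReal.ofReal (‖x‖ ^ (-((β + lam) * q))) := by
          apply setLIntegral_mono' (hAm k)
          intro x hx
          apply mul_le_mul_left
          apply ENNReal.rpow_le_rpow _ hq0.le
          apply lintegral_mono_set
          intro y hy
          show ‖y‖ < r k
          have h2 := hr2 k
          have hy' : ‖y‖ ≤ ‖x‖/2 := hy
          have hx2 : ‖x‖ < r (k+1) := hx.2
          linarith
      _ = (T k)^q * ∫⁻ x in A k, ENNReal.ofReal (‖x‖ ^ (-((β + lam) * q))) :=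
          lintegral_const_mul _ ((measurable_norm.pow_const _).ennreal_ofReal)
      _ ≤ (T k)^q * (ENNReal.ofReal (c₂ * (r k)^(-(δ*q))) * B) := by
          apply mul_le_mul_right
          have h2 := hw (-((β+lam)*q)) k
          rw [hδq, ← hc₂] at h2
          exact h2
  have step3 : ∀ k : ℤ, (T k)^q * (ENNReal.ofReal (c₂ * (r k)^(-(δ*q))) * B)
      ≤ K₀ * (W k)^((1/p)*q) := by
    intro k
    have h1 : (T k)^q ≤ (ENNReal.ofReal (c₃ * (r k)^δ) * B' * ((W k)^(1/p) * S^(1/p')))^q :=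
      ENNReal.rpow_le_rpow (step2 k) hq0.le
    have hmerge : ENNReal.ofReal (c₃^q * c₂)
        = ENNReal.ofReal ((c₃ * (r k)^δ)^q) * ENNReal.ofReal (c₂ * (r k)^(-(δ*q))) := by
      rw [← ENNReal.ofReal_mul (by positivity)]
      congr 1
      rw [Real.mul_rpow hc₃pos.le (Real.rpow_nonneg (hrpos k).le δ),
        ← Real.rpow_mul (hrpos k).le]
      rw [show c₃^q * (r k)^(δ*q) * (c₂ * (r k)^(-(δ*q)))
          = c₃^q * c₂ * ((r k)^(δ*q) * (r k)^(-(δ*q))) by ring,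
        ← Real.rpow_add (hrpos k), add_neg_cancel, Real.rpow_zero, mul_one]
    calc (T k)^q * (ENNReal.ofReal (c₂ * (r k)^(-(δ*q))) * B)
        ≤ (ENNReal.ofReal (c₃ * (r k)^δ) * B' * ((W k)^(1/p) * S^(1/p')))^q *
            (ENNReal.ofReal (c₂ * (r k)^(-(δ*q))) * B) := mul_le_mul_left h1 _
      _ = K₀ * (W k)^((1/p)*q) := by
          rw [ENNReal.mul_rpow_of_nonneg _ _ hq0.le, ENNReal.mul_rpow_of_nonneg _ _ hq0.le,
            ENNReal.mul_rpow_of_nonneg _ _ hq0.le,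
            ← ENNReal.rpow_mul (W k), ← ENNReal.rpow_mul S,
            ENNReal.ofReal_rpow_of_nonneg (by positivity) hq0.le,
            hK₀, hmerge]
          ring
  -- ## assembling
  have hI : (∫⁻ x : EuclideanSpace ℝ (Fin N), (∫⁻ y in {y : EuclideanSpace ℝ (Fin N) | ‖y‖ ≤ ‖x‖ / 2},
        ENNReal.ofReal (u y)) ^ q * ENNReal.ofReal (‖x‖ ^ (-((β + lam) * q))))
      ≤ K * Utot ^ ((1/p)*q) := by
    calc (∫⁻ x : EuclideanSpace ℝ (Fin N), (∫⁻ y in {y : EuclideanSpace ℝ (Fin N) | ‖y‖ ≤ ‖x‖ / 2},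
          ENNReal.ofReal (u y)) ^ q * ENNReal.ofReal (‖x‖ ^ (-((β + lam) * q))))
        = ∑' k : ℤ, ∫⁻ x in A k,
            (∫⁻ y in {y : EuclideanSpace ℝ (Fin N) | ‖y‖ ≤ ‖x‖ / 2},
              ENNReal.ofReal (u y)) ^ q * ENNReal.ofReal (‖x‖ ^ (-((β + lam) * q))) :=
          hsplit _
      _ ≤ ∑' k : ℤ, (T k)^q * (ENNReal.ofReal (c₂ * (r k)^(-(δ*q))) * B) :=
          ENNReal.tsum_le_tsum step1
      _ ≤ ∑' k : ℤ, K₀ * (W k)^((1/p)*q) := ENNReal.tsum_le_tsum step3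
      _ = K₀ * ∑' k : ℤ, (W k)^((1/p)*q) := ENNReal.tsum_mul_left
      _ ≤ K₀ * (∑' k : ℤ, W k)^((1/p)*q) := mul_le_mul_right (my_tsum_rpow_le _ hqp1) _
      _ ≤ K₀ * (S * Utot)^((1/p)*q) := by
          apply mul_le_mul_right
          apply ENNReal.rpow_le_rpow _ (by positivity)
          apply le_of_eq
          calc ∑' k : ℤ, W k = ∑' n : ℕ, ∑' k : ℤ, τ^(n+1) * U (k-1-(n:ℤ)) := by
                rw [hWdef]; exact ENNReal.tsum_comm
            _ = ∑' n : ℕ, τ^(n+1) * ∑' k : ℤ, U (k-1-(n:ℤ)) :=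
                tsum_congr fun n => ENNReal.tsum_mul_left
            _ = ∑' n : ℕ, τ^(n+1) * Utot := by
                apply tsum_congr; intro n
                congr 1
                calc ∑' k : ℤ, U (k-1-(n:ℤ)) = ∑' k : ℤ, U (k - (1+(n:ℤ))) := by
                      apply tsum_congr; intro k; congr 1; ring
                  _ = ∑' j : ℤ, U j := (Equiv.subRight (1+(n:ℤ))).tsum_eq U
                  _ = Utot := hUsum.symm
            _ = S * Utot := by rw [ENNReal.tsum_mul_right, ← hSdef]
      _ = K * Utot^((1/p)*q) := by
          rw [hK, ENNReal.mul_rpow_of_nonneg _ _ (by positivity : (0:ℝ) ≤ (1/p)*q)]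
          ring
  calc (∫⁻ x : EuclideanSpace ℝ (Fin N), (∫⁻ y in {y : EuclideanSpace ℝ (Fin N) | ‖y‖ ≤ ‖x‖ / 2},
        ENNReal.ofReal (u y)) ^ q * ENNReal.ofReal (‖x‖ ^ (-((β + lam) * q)))) ^ (1/q)
      ≤ (K * Utot ^ ((1/p)*q)) ^ (1/q) := ENNReal.rpow_le_rpow hI (by positivity)
    _ = K^(1/q) * Utot^(1/p) := by
        rw [ENNReal.mul_rpow_of_nonneg _ _ (by positivity), ← ENNReal.rpow_mul,
          show ((1/p)*q)*(1/q) = 1/p by field_simp]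
    _ ≤ ENNReal.ofReal ((K ^ (1/q)).toReal + 1) * Utot^(1/p) := by
        apply mul_le_mul_left
        conv_lhs => rw [← ENNReal.ofReal_toReal hKq]
        exact ENNReal.ofReal_le_ofReal (by linarith [ENNReal.toReal_nonneg (a := K^(1/q))])
end

section
/- Let N ≥ 1, 1<p≤q<∞, let p' satisfy 1/p + 1/p' = 1, let 0<λ<N, and let real numbers α, β satisfy β < N/q, (α+λ)p' > N, and 1/q = 1/p + (α+β+λ)/N − 1. Then there exists a constant C>0, independent of u, such that for every measurable u ≥ 0 on ℝ^N: (∫_{ℝ^N} (∫_{‖y‖ ≥ 2‖x‖} u(y) ‖y‖^{−λ} dy)^q ‖x‖^{−βq} dx)^{1/q} ≤ C (∫_{ℝ^N} u(x)^p ‖x‖^{αp} dx)^{1/p}. -/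
open MeasureTheory Real
open scoped ENNReal

private lemma tsum_rpow_le_rpow_tsum {ι : Type*} (a : ι → ℝ≥0∞) {r : ℝ} (hr : 1 ≤ r) :
    ∑' i, a i ^ r ≤ (∑' i, a i) ^ r := by
  have hr0 : 0 < r := lt_of_lt_of_le zero_lt_one hr
  by_cases hS : ∑' i, a i = ∞
  · rw [hS, ENNReal.top_rpow_of_pos hr0]; exact le_top
  have hterm : ∀ i, a i ^ r ≤ (∑' i, a i) ^ (r - 1) * a i := by
    intro i
    by_cases h0 : a i = 0
    · simp [h0, ENNReal.zero_rpow_of_pos hr0]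
    · have hle : a i ≤ ∑' i, a i := ENNReal.le_tsum i
      have hne : a i ≠ ∞ := fun h => hS (top_le_iff.mp (h ▸ hle))
      calc a i ^ r = a i ^ (r - 1) * a i := by
            nth_rewrite 3 [← ENNReal.rpow_one (a i)]
            rw [← ENNReal.rpow_add _ _ h0 hne]; norm_num
        _ ≤ (∑' i, a i) ^ (r - 1) * a i :=
            mul_le_mul_left (ENNReal.rpow_le_rpow hle (by linarith)) _
  calc ∑' i, a i ^ r ≤ ∑' i, (∑' i, a i) ^ (r-1) * a i := ENNReal.tsum_le_tsum hterm
    _ = (∑' i, a i) ^ (r-1) * (∑' i, a i) := by rw [ENNReal.tsum_mul_left]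
    _ = (∑' i, a i) ^ r := by
        by_cases hS0 : (∑' i, a i) = 0
        · simp [hS0, ENNReal.zero_rpow_of_pos hr0, ENNReal.zero_rpow_of_pos (by linarith : (0:ℝ) < r - 1 + 1)]
        · nth_rewrite 2 [← ENNReal.rpow_one (∑' i, a i)]
          rw [← ENNReal.rpow_add _ _ hS0 hS]; norm_num

private lemma tsum_holder (f g : ℕ → ℝ≥0∞) {p p' : ℝ} (hc : p.HolderConjugate p') :
    ∑' m, f m * g m ≤ (∑' m, f m ^ p) ^ (1/p) * (∑' m, g m ^ p') ^ (1/p') := by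
  have h := ENNReal.lintegral_mul_le_Lp_mul_Lq (Measure.count : Measure ℕ) hc
    (measurable_of_countable f).aemeasurable (measurable_of_countable g).aemeasurable
  simpa [MeasureTheory.lintegral_count] using h
private lemma pow_rpow_comm (x : ℝ≥0∞) (n : ℕ) (s : ℝ) : (x ^ n) ^ s = (x ^ s) ^ n := by
  rw [← ENNReal.rpow_natCast x n, ← ENNReal.rpow_mul, mul_comm, ENNReal.rpow_mul,
    ENNReal.rpow_natCast]

private lemma discrete_hardy {p q p' : ℝ} (hc : p.HolderConjugate p') (hpq : p ≤ q)
    {ρ : ℝ≥0∞} (hρ : ρ < 1) :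
    ∃ D : ℝ≥0∞, D ≠ ∞ ∧ ∀ a : ℤ → ℝ≥0∞,
      ∑' k : ℤ, (∑' m : ℕ, a (k + 1 + m) ^ (1/p) * (ρ * ρ) ^ (m+1)) ^ q
        ≤ D * (∑' j : ℤ, a j) ^ (q/p) := by
  have hp0 : 0 < p := hc.pos
  have hp'0 : 0 < p' := hc.symm.pos
  have hq0 : 0 < q := lt_of_lt_of_le hp0 hpq
  have hqp1 : 1 ≤ q / p := (one_le_div hp0).2 hpq
  have hρp : ρ ^ p < 1 := ENNReal.rpow_lt_one hρ hp0
  have hρp' : ρ ^ p' < 1 := ENNReal.rpow_lt_one hρ hp'0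
  set G' : ℝ≥0∞ := (1 - ρ ^ p')⁻¹ with hG'
  set Gp : ℝ≥0∞ := (1 - ρ ^ p)⁻¹ with hGp
  have hG'ne : G' ≠ ∞ := ENNReal.inv_ne_top.2 (tsub_pos_of_lt hρp').ne'
  have hGpne : Gp ≠ ∞ := ENNReal.inv_ne_top.2 (tsub_pos_of_lt hρp).ne'
  refine ⟨G' ^ (q/p') * Gp ^ (q/p), ENNReal.mul_ne_top
    (ENNReal.rpow_ne_top_of_nonneg (by positivity) hG'ne)
    (ENNReal.rpow_ne_top_of_nonneg (by positivity) hGpne), fun a => ?_⟩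
  set A : ℝ≥0∞ := ∑' j : ℤ, a j with hA
  set T : ℤ → ℝ≥0∞ := fun k => ∑' m : ℕ, a (k + 1 + m) * (ρ ^ p) ^ (m+1) with hT
  have hSk : ∀ k : ℤ, (∑' m : ℕ, a (k + 1 + m) ^ (1/p) * (ρ * ρ) ^ (m+1))
      ≤ (T k) ^ (1/p) * G' ^ (1/p') := by
    intro k
    have h1 : ∀ m : ℕ, a (k + 1 + m) ^ (1/p) * (ρ * ρ) ^ (m+1)
        = (a (k + 1 + m) ^ (1/p) * ρ ^ (m+1)) * ρ ^ (m+1) := by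
      intro m; rw [mul_pow]; ring
    rw [tsum_congr h1]
    refine le_trans (tsum_holder _ _ hc) ?_
    have h2 : ∀ m : ℕ, (a (k + 1 + m) ^ (1/p) * ρ ^ (m+1)) ^ p
        = a (k + 1 + m) * (ρ ^ p) ^ (m+1) := by
      intro m
      rw [ENNReal.mul_rpow_of_nonneg _ _ hp0.le, ← ENNReal.rpow_mul,
        one_div_mul_cancel hp0.ne', ENNReal.rpow_one, pow_rpow_comm]
    have h3 : ∀ m : ℕ, ((ρ ^ (m+1) : ℝ≥0∞)) ^ p' = (ρ ^ p') ^ (m+1) := fun m => pow_rpow_comm _ _ _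
    rw [tsum_congr h2, tsum_congr h3]
    refine mul_le_mul_right (ENNReal.rpow_le_rpow ?_ (by positivity)) _
    calc ∑' m : ℕ, (ρ ^ p') ^ (m+1) = ρ ^ p' * (1 - ρ ^ p')⁻¹ := ENNReal.tsum_geometric_add_one _
      _ ≤ 1 * G' := mul_le_mul_left hρp'.le _
      _ = G' := one_mul _
  calc ∑' k : ℤ, (∑' m : ℕ, a (k + 1 + m) ^ (1/p) * (ρ * ρ) ^ (m+1)) ^ q
      ≤ ∑' k : ℤ, (T k ^ (1/p) * G' ^ (1/p')) ^ q :=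
        ENNReal.tsum_le_tsum fun k => ENNReal.rpow_le_rpow (hSk k) hq0.le
    _ = G' ^ (q/p') * ∑' k : ℤ, (T k) ^ (q/p) := by
        rw [← ENNReal.tsum_mul_left]
        refine tsum_congr fun k => ?_
        rw [ENNReal.mul_rpow_of_nonneg _ _ hq0.le, ← ENNReal.rpow_mul, ← ENNReal.rpow_mul]
        rw [show 1/p * q = q/p by ring, show 1/p' * q = q/p' by ring, mul_comm]
    _ ≤ G' ^ (q/p') * (∑' k : ℤ, T k) ^ (q/p) :=
        mul_le_mul_right (tsum_rpow_le_rpow_tsum _ hqp1) _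
    _ ≤ G' ^ (q/p') * (Gp * A) ^ (q/p) := by
        refine mul_le_mul_right (ENNReal.rpow_le_rpow ?_ (by positivity)) _
        calc ∑' k : ℤ, T k = ∑' m : ℕ, ∑' k : ℤ, a (k + 1 + m) * (ρ ^ p) ^ (m+1) :=
              ENNReal.tsum_comm
          _ = ∑' m : ℕ, (ρ ^ p) ^ (m+1) * A := by
              refine tsum_congr fun m => ?_
              rw [ENNReal.tsum_mul_right, mul_comm]
              congr 1
              have := (Equiv.addRight ((1 : ℤ) + m)).tsum_eq a
              simp only [Equiv.coe_addRight] at this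
              rw [hA, ← this]
              exact tsum_congr fun k => by rw [add_assoc]
          _ = (ρ ^ p * (1 - ρ ^ p)⁻¹) * A := by
              rw [ENNReal.tsum_mul_right, ENNReal.tsum_geometric_add_one]
          _ ≤ Gp * A := mul_le_mul_left (by
              calc ρ ^ p * (1 - ρ ^ p)⁻¹ ≤ 1 * Gp := mul_le_mul_left hρp.le _
                _ = Gp := one_mul _) _
    _ = G' ^ (q/p') * Gp ^ (q/p) * A ^ (q/p) := by
        rw [ENNReal.mul_rpow_of_nonneg _ _ (by positivity), mul_assoc]

private lemma ann_rpow_le {x c : ℝ} (h1 : c ≤ x) (h2 : x ≤ 2*c) (hc : 0 < c) (s : ℝ) :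
    x ^ s ≤ 2 ^ |s| * c ^ s := by
  rcases le_or_gt 0 s with hs | hs
  · calc x ^ s ≤ (2*c) ^ s := Real.rpow_le_rpow (by linarith) h2 hs
      _ = 2 ^ s * c ^ s := Real.mul_rpow (by norm_num) hc.le
      _ ≤ 2 ^ |s| * c ^ s := by
          have := Real.rpow_le_rpow_of_exponent_le one_le_two (le_abs_self s)
          exact mul_le_mul_of_nonneg_right this (Real.rpow_nonneg hc.le s)
  · calc x ^ s ≤ c ^ s := Real.rpow_le_rpow_of_nonpos hc h1 hs.le
      _ = 1 * c ^ s := (one_mul _).symm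
      _ ≤ 2 ^ |s| * c ^ s :=
          mul_le_mul_of_nonneg_right (Real.one_le_rpow one_le_two (abs_nonneg s))
            (Real.rpow_nonneg hc.le s)

private lemma two_zpow_rpow (k : ℤ) (s : ℝ) : ((2:ℝ)^k) ^ s = (2:ℝ) ^ ((k:ℝ) * s) := by
  rw [← Real.rpow_intCast (2:ℝ) k, ← Real.rpow_mul (by norm_num)]

private lemma ofReal_two_rpow_mul (x y : ℝ) :
    ENNReal.ofReal ((2:ℝ)^x) * ENNReal.ofReal ((2:ℝ)^y) = ENNReal.ofReal ((2:ℝ)^(x+y)) := by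
  rw [← ENNReal.ofReal_mul (by positivity), ← Real.rpow_add (by norm_num)]

private lemma ofReal_two_rpow_rpow (x r : ℝ) (hr : 0 ≤ r) :
    ENNReal.ofReal ((2:ℝ)^x) ^ r = ENNReal.ofReal ((2:ℝ)^(x*r)) := by
  rw [ENNReal.ofReal_rpow_of_nonneg (by positivity) hr, ← Real.rpow_mul (by norm_num)]

/-- Dual power-weight Hardy inequality for the outer region:
`(∫ (∫_{‖y‖≥2‖x‖} u(y)‖y‖^{-λ} dy)^q ‖x‖^{-βq} dx)^{1/q} ≤ C (∫ u^p ‖x‖^{αp})^{1/p}`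
when `1 < p ≤ q < ∞`, `0 < λ < N`, `β < N/q`, `(α+λ)p' > N` and
`1/q = 1/p + (α+β+λ)/N - 1`. -/
theorem hardy_outer_region
    (N : ℕ) (hN : 1 ≤ N) (p q p' lam α β : ℝ)
    (hp : 1 < p) (hpq : p ≤ q) (hp' : 1 / p + 1 / p' = 1)
    (hlam0 : 0 < lam) (hlamN : lam < N)
    (hβ : β < N / q) (halphalam : (N : ℝ) < (α + lam) * p')
    (hscal : 1 / q = 1 / p + (α + β + lam) / N - 1) :
    ∃ C : ℝ, 0 < C ∧ ∀ u : EuclideanSpace ℝ (Fin N) → ℝ,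
      Measurable u → (∀ x, 0 ≤ u x) →
      (∫⁻ (x : EuclideanSpace ℝ (Fin N)), (∫⁻ y in {y : EuclideanSpace ℝ (Fin N) | 2 * ‖x‖ ≤ ‖y‖},
            ENNReal.ofReal (u y * ‖y‖ ^ (-lam))) ^ q *
          ENNReal.ofReal (‖x‖ ^ (-(β * q)))) ^ (1 / q)
        ≤ ENNReal.ofReal C *
          (∫⁻ x, ENNReal.ofReal (u x ^ p) * ENNReal.ofReal (‖x‖ ^ (α * p))) ^ (1 / p) := by
  have hp0 : 0 < p := lt_trans zero_lt_one hp
  have hq0 : 0 < q := lt_of_lt_of_le hp0 hpq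
  have hNpos : 0 < N := hN
  have hN0 : (0:ℝ) < N := by exact_mod_cast hNpos
  have hconj : p.HolderConjugate p' := Real.holderConjugate_iff.mpr ⟨hp, by simpa [one_div] using hp'⟩
  have hp'0 : 0 < p' := hconj.symm.pos
  set σ : ℝ := β - N / q with hσdef
  have hσneg : σ < 0 := sub_neg.mpr hβ
  set sp : ℝ := (-lam - α) * p' with hspdef
  -- scalar identities
  have hβeq : β = N * (1/q) + N * (1/p') - α - lam := by
    have h1 : (α + β + lam)/N = 1/q + 1/p' := by linarith
    have h2 : α + β + lam = N * (1/q + 1/p') := by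
      field_simp at h1 ⊢
      linarith
    linarith [h2]
  have h1p' : (1/p') * p' = 1 := by field_simp
  have h1q : (1/q) * q = 1 := by field_simp
  have key1 : sp + N = σ * p' := by
    rw [hspdef, hσdef]
    have hNq : N / q = N * (1/q) := by ring
    rw [hNq, hβeq]
    linear_combination (-(N:ℝ)) * h1p'
  have key2 : σ * q = β * q - N := by
    rw [hσdef]
    have : N / q = N * (1/q) := by ring
    rw [this]
    linear_combination (-(N:ℝ)) * h1q
  -- geometry
  set A : ℤ → Set (EuclideanSpace ℝ (Fin N)) :=
    fun k => {x | (2:ℝ)^k ≤ ‖x‖ ∧ ‖x‖ < (2:ℝ)^(k+1)} with hAdef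
  have hA_meas : ∀ k, MeasurableSet (A k) := fun k =>
    (measurableSet_le measurable_const measurable_norm).inter
      (measurableSet_lt measurable_norm measurable_const)
  have hcover : ∀ x : EuclideanSpace ℝ (Fin N), x ≠ 0 → ∃ k, x ∈ A k := by
    intro x hx
    have hx0 : 0 < ‖x‖ := norm_pos_iff.mpr hx
    obtain ⟨n, hn⟩ := exists_mem_Ico_zpow hx0 (one_lt_two (α := ℝ))
    exact ⟨n, hn.1, hn.2⟩
  have hdisj : Pairwise (Function.onFun Disjoint A) := by
    have key : ∀ i j : ℤ, i < j → Disjoint (A i) (A j) := by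
      intro i j hij
      rw [Set.disjoint_left]
      intro x hxi hxj
      have h2 : (2:ℝ)^(i+1) ≤ (2:ℝ)^j := zpow_le_zpow_right₀ one_le_two (by omega)
      exact absurd hxi.2 (not_lt.2 (le_trans h2 hxj.1))
    intro i j hij
    rcases lt_or_gt_of_ne hij with h | h
    · exact key i j h
    · exact (key j i h).symm
  set V := volume (Metric.ball (0 : EuclideanSpace ℝ (Fin N)) 1) with hV
  have hVne : V ≠ ∞ := measure_ball_lt_top.ne
  have hvol : ∀ k : ℤ, volume (A k)
      ≤ ENNReal.ofReal ((2:ℝ)^((k:ℝ)*N) * (2:ℝ)^(N:ℝ)) * V := by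
    intro k
    have hr : (0:ℝ) ≤ (2:ℝ)^(k+1) := (zpow_pos two_pos _).le
    have hsub : A k ⊆ Metric.closedBall 0 ((2:ℝ)^(k+1)) := fun x hx => by
      simpa [Metric.mem_closedBall, dist_zero_right] using hx.2.le
    have h := Measure.addHaar_closedBall (volume : Measure (EuclideanSpace ℝ (Fin N)))
      (0 : EuclideanSpace ℝ (Fin N)) hr
    rw [finrank_euclideanSpace_fin] at h
    refine le_trans (measure_mono hsub) (le_of_eq (h.trans ?_))
    congr 1
    congr 1
    rw [← Real.rpow_natCast ((2:ℝ)^(k+1:ℤ)) N, two_zpow_rpow]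
    rw [← Real.rpow_add (by norm_num)]
    congr 1
    push_cast
    ring
  have hwint : ∀ (s : ℝ) (k : ℤ), (∫⁻ x in A k, ENNReal.ofReal (‖x‖ ^ s))
      ≤ ENNReal.ofReal ((2:ℝ) ^ (|s| + N)) * ENNReal.ofReal ((2:ℝ) ^ ((k:ℝ)*(s + N))) * V := by
    intro s k
    have hck : (0:ℝ) < (2:ℝ)^k := zpow_pos two_pos _
    have hb : ∀ x ∈ A k, ENNReal.ofReal (‖x‖ ^ s)
        ≤ ENNReal.ofReal ((2:ℝ)^|s| * ((2:ℝ)^k)^s) := by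
      intro x hx
      refine ENNReal.ofReal_le_ofReal (ann_rpow_le hx.1 ?_ hck s)
      have : (2:ℝ)^(k+1) = 2 * (2:ℝ)^k := by rw [zpow_add_one₀ (two_ne_zero)]; ring
      linarith [hx.2]
    calc (∫⁻ x in A k, ENNReal.ofReal (‖x‖ ^ s))
        ≤ ∫⁻ _x in A k, ENNReal.ofReal ((2:ℝ)^|s| * ((2:ℝ)^k)^s) :=
          setLIntegral_mono' (hA_meas k) hb
      _ = ENNReal.ofReal ((2:ℝ)^|s| * ((2:ℝ)^k)^s) * volume (A k) := setLIntegral_const _ _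
      _ ≤ ENNReal.ofReal ((2:ℝ)^|s| * ((2:ℝ)^k)^s)
            * (ENNReal.ofReal ((2:ℝ)^((k:ℝ)*N) * (2:ℝ)^(N:ℝ)) * V) :=
          mul_le_mul_right (hvol k) _
      _ = ENNReal.ofReal ((2:ℝ) ^ (|s| + N)) * ENNReal.ofReal ((2:ℝ) ^ ((k:ℝ)*(s + N))) * V := by
          rw [two_zpow_rpow, ← mul_assoc]
          congr 1
          rw [← ENNReal.ofReal_mul (by positivity), ofReal_two_rpow_mul]
          congr 1
          rw [← Real.rpow_add (by norm_num), ← Real.rpow_add (by norm_num),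
            ← Real.rpow_add (by norm_num)]
          congr 1
          ring
  have hzero : volume ({(0 : EuclideanSpace ℝ (Fin N))} : Set (EuclideanSpace ℝ (Fin N))) = 0 := by
    have h := Measure.addHaar_closedBall (volume : Measure (EuclideanSpace ℝ (Fin N)))
      (0 : EuclideanSpace ℝ (Fin N)) (le_refl (0:ℝ))
    rw [Metric.closedBall_zero, finrank_euclideanSpace_fin] at h
    rw [h, zero_pow (by omega : N ≠ 0)]
    simp
  -- constants
  set ρ : ℝ≥0∞ := ENNReal.ofReal ((2:ℝ)^(σ/2)) with hρdef
  have hρ1 : ρ < 1 := by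
    rw [hρdef]
    exact ENNReal.ofReal_lt_one.mpr
      (Real.rpow_lt_one_of_one_lt_of_neg one_lt_two (by linarith))
  obtain ⟨D, hDne, hdisc⟩ := discrete_hardy hconj hpq hρ1
  set W : ℝ≥0∞ := ENNReal.ofReal ((2:ℝ)^((|sp|+N)*(1/p'))) * V ^ (1/p') with hWdef
  have hWne : W ≠ ∞ := ENNReal.mul_ne_top ENNReal.ofReal_ne_top
    (ENNReal.rpow_ne_top_of_nonneg (by positivity) hVne)
  set K : ℝ≥0∞ := W ^ q * ENNReal.ofReal ((2:ℝ)^(|(-(β*q))|))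
    * ENNReal.ofReal ((2:ℝ)^((N:ℝ))) * V with hKdef
  have hKne : K ≠ ∞ :=
    ENNReal.mul_ne_top (ENNReal.mul_ne_top (ENNReal.mul_ne_top
      (ENNReal.rpow_ne_top_of_nonneg hq0.le hWne) ENNReal.ofReal_ne_top)
      ENNReal.ofReal_ne_top) hVne
  have hKD : (K * D) ^ (1/q) ≠ ∞ :=
    ENNReal.rpow_ne_top_of_nonneg (by positivity) (ENNReal.mul_ne_top hKne hDne)
  refine ⟨((K*D)^(1/q)).toReal + 1, by positivity, fun u hu hu0 => ?_⟩
  set a : ℤ → ℝ≥0∞ := fun j => ∫⁻ x in A j,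
    ENNReal.ofReal (u x ^ p) * ENNReal.ofReal (‖x‖ ^ (α * p)) with hadef
  set S : ℤ → ℝ≥0∞ := fun k => ∑' m : ℕ, a (k+1+m) ^ (1/p) * (ρ*ρ)^(m+1) with hSdef
  set R : ℝ≥0∞ := ∫⁻ x, ENNReal.ofReal (u x ^ p) * ENNReal.ofReal (‖x‖ ^ (α * p)) with hRdef
  have hIj : ∀ j : ℤ, (∫⁻ y in A j, ENNReal.ofReal (u y * ‖y‖ ^ (-lam)))
      ≤ a j ^ (1/p) * (W * ENNReal.ofReal ((2:ℝ)^((j:ℝ)*σ))) := by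
    intro j
    have hgt : ∀ y ∈ A j, (0:ℝ) < ‖y‖ := fun y hy => lt_of_lt_of_le (zpow_pos two_pos j) hy.1
    have hre : (∫⁻ y in A j, ENNReal.ofReal (u y * ‖y‖ ^ (-lam)))
        = ∫⁻ y in A j, ENNReal.ofReal (u y * ‖y‖ ^ α) * ENNReal.ofReal (‖y‖ ^ (-lam - α)) := by
      refine setLIntegral_congr_fun (hA_meas j) (fun y hy => ?_)
      rw [← ENNReal.ofReal_mul (mul_nonneg (hu0 y) (Real.rpow_nonneg (norm_nonneg y) _)),
        mul_assoc, ← Real.rpow_add (hgt y hy)]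
      norm_num
    have hf : AEMeasurable (fun y : EuclideanSpace ℝ (Fin N) => ENNReal.ofReal (u y * ‖y‖ ^ α))
        (volume.restrict (A j)) := by fun_prop
    have hg : AEMeasurable (fun y : EuclideanSpace ℝ (Fin N) =>
        ENNReal.ofReal (‖y‖ ^ (-lam - α))) (volume.restrict (A j)) := by fun_prop
    have H := ENNReal.lintegral_mul_le_Lp_mul_Lq (volume.restrict (A j)) hconj hf hg
    simp only [Pi.mul_apply] at H
    rw [hre]
    refine le_trans H (mul_le_mul' (le_of_eq ?_) ?_)
    · -- (∫ f^p)^{1/p} = a j ^{1/p}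
      congr 1
      refine lintegral_congr fun y => ?_
      rw [ENNReal.ofReal_rpow_of_nonneg
          (mul_nonneg (hu0 y) (Real.rpow_nonneg (norm_nonneg y) _)) hp0.le,
        Real.mul_rpow (hu0 y) (Real.rpow_nonneg (norm_nonneg y) α),
        ← Real.rpow_mul (norm_nonneg y), ENNReal.ofReal_mul (Real.rpow_nonneg (hu0 y) p)]
    · have he : (∫⁻ y in A j, (ENNReal.ofReal (‖y‖ ^ (-lam - α))) ^ p')
          = ∫⁻ y in A j, ENNReal.ofReal (‖y‖ ^ sp) := by
        refine lintegral_congr fun y => ?_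
        rw [ENNReal.ofReal_rpow_of_nonneg (Real.rpow_nonneg (norm_nonneg y) _) hp'0.le,
          ← Real.rpow_mul (norm_nonneg y), hspdef]
      rw [he]
      refine le_trans (ENNReal.rpow_le_rpow (hwint sp j) (by positivity)) ?_
      rw [ENNReal.mul_rpow_of_nonneg _ _ (by positivity),
        ENNReal.mul_rpow_of_nonneg _ _ (by positivity),
        ofReal_two_rpow_rpow _ _ (by positivity), ofReal_two_rpow_rpow _ _ (by positivity)]
      have hje : ((j:ℝ) * (sp + N)) * (1/p') = (j:ℝ) * σ := by
        rw [key1]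
        linear_combination ((j:ℝ)*σ) * h1p'
      rw [hje, hWdef]
      exact le_of_eq (by ring)
  have hinner : ∀ (k : ℤ) (x : EuclideanSpace ℝ (Fin N)), x ∈ A k →
      (∫⁻ y in {y : EuclideanSpace ℝ (Fin N) | 2 * ‖x‖ ≤ ‖y‖},
        ENNReal.ofReal (u y * ‖y‖ ^ (-lam)))
      ≤ (W * ENNReal.ofReal ((2:ℝ)^((k:ℝ)*σ))) * S k := by
    intro k x hx
    have hsub : {y : EuclideanSpace ℝ (Fin N) | 2 * ‖x‖ ≤ ‖y‖} ⊆ ⋃ m : ℕ, A (k+1+m) := by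
      intro y hy
      have h1 : (2:ℝ)^(k+1) ≤ ‖y‖ := by
        have h2 : (2:ℝ)^(k+1) = 2 * (2:ℝ)^k := by rw [zpow_add_one₀ two_ne_zero]; ring
        have h3 := hx.1
        have h4 : 2*‖x‖ ≤ ‖y‖ := hy
        rw [h2]; linarith
      have hy0 : y ≠ 0 := norm_pos_iff.mp (lt_of_lt_of_le (zpow_pos two_pos (k+1)) h1)
      obtain ⟨j, hj⟩ := hcover y hy0
      have hkj : k+1 ≤ j := by
        by_contra hcon
        push_neg at hcon
        have h5 : (2:ℝ)^(j+1) ≤ (2:ℝ)^(k+1) := zpow_le_zpow_right₀ one_le_two (by omega)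
        exact absurd (lt_of_lt_of_le hj.2 (le_trans h5 h1)) (lt_irrefl _)
      refine Set.mem_iUnion.2 ⟨(j - (k+1)).toNat, ?_⟩
      have he : k + 1 + ((j - (k+1)).toNat : ℤ) = j := by omega
      rw [he]; exact hj
    calc (∫⁻ y in {y : EuclideanSpace ℝ (Fin N) | 2 * ‖x‖ ≤ ‖y‖},
            ENNReal.ofReal (u y * ‖y‖ ^ (-lam)))
        ≤ ∫⁻ y in ⋃ m : ℕ, A (k+1+m), ENNReal.ofReal (u y * ‖y‖ ^ (-lam)) :=
          lintegral_mono_set hsub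
      _ ≤ ∑' m : ℕ, ∫⁻ y in A (k+1+m), ENNReal.ofReal (u y * ‖y‖ ^ (-lam)) :=
          lintegral_iUnion_le _ _
      _ ≤ ∑' m : ℕ, a (k+1+m) ^ (1/p)
            * (W * ENNReal.ofReal ((2:ℝ)^((((k+1+(m:ℤ)) : ℤ):ℝ)*σ))) :=
          ENNReal.tsum_le_tsum fun m => hIj (k+1+m)
      _ = (W * ENNReal.ofReal ((2:ℝ)^((k:ℝ)*σ))) * S k := by
          simp only [hSdef, ← ENNReal.tsum_mul_left]
          refine tsum_congr fun m => ?_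
          have hr : (((k+1+(m:ℤ)) : ℤ):ℝ) * σ = (k:ℝ)*σ + (σ/2 + σ/2) * ((m:ℝ)+1) := by
            push_cast; ring
          have hpow : (2:ℝ) ^ ((σ/2 + σ/2) * ((m:ℝ)+1))
              = ((2:ℝ)^(σ/2) * (2:ℝ)^(σ/2)) ^ (m+1 : ℕ) := by
            rw [← Real.rpow_natCast ((2:ℝ)^(σ/2) * (2:ℝ)^(σ/2)) (m+1),
              ← Real.rpow_add two_pos, ← Real.rpow_mul (by norm_num : (0:ℝ) ≤ 2)]
            congr 1
            push_cast
            ring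
          rw [hr, Real.rpow_add two_pos, hpow, ENNReal.ofReal_mul (by positivity),
            ENNReal.ofReal_pow (by positivity), ENNReal.ofReal_mul (by positivity), hρdef]
          ring
  have hFK : ∀ k : ℤ, (∫⁻ x in A k,
      (∫⁻ y in {y : EuclideanSpace ℝ (Fin N) | 2 * ‖x‖ ≤ ‖y‖},
        ENNReal.ofReal (u y * ‖y‖ ^ (-lam))) ^ q * ENNReal.ofReal (‖x‖ ^ (-(β * q))))
      ≤ K * S k ^ q := by
    intro k
    have hck : (0:ℝ) < (2:ℝ)^k := zpow_pos two_pos _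
    set B : ℝ≥0∞ := ((W * ENNReal.ofReal ((2:ℝ)^((k:ℝ)*σ))) * S k) ^ q
      * ENNReal.ofReal ((2:ℝ)^(|(-(β*q))|) * ((2:ℝ)^k) ^ (-(β*q))) with hBdef
    have hb : ∀ x ∈ A k, (∫⁻ y in {y : EuclideanSpace ℝ (Fin N) | 2 * ‖x‖ ≤ ‖y‖},
        ENNReal.ofReal (u y * ‖y‖ ^ (-lam))) ^ q
        * ENNReal.ofReal (‖x‖ ^ (-(β * q))) ≤ B := by
      intro x hx
      refine mul_le_mul' (ENNReal.rpow_le_rpow (hinner k x hx) hq0.le)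
        (ENNReal.ofReal_le_ofReal ?_)
      refine ann_rpow_le hx.1 ?_ hck _
      have h2 : (2:ℝ)^(k+1) = 2 * (2:ℝ)^k := by rw [zpow_add_one₀ two_ne_zero]; ring
      linarith [hx.2]
    calc (∫⁻ x in A k, (∫⁻ y in {y : EuclideanSpace ℝ (Fin N) | 2 * ‖x‖ ≤ ‖y‖},
            ENNReal.ofReal (u y * ‖y‖ ^ (-lam))) ^ q * ENNReal.ofReal (‖x‖ ^ (-(β * q))))
        ≤ ∫⁻ _x in A k, B := setLIntegral_mono' (hA_meas k) hb
      _ = B * volume (A k) := setLIntegral_const _ _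
      _ ≤ B * (ENNReal.ofReal ((2:ℝ)^((k:ℝ)*N) * (2:ℝ)^(N:ℝ)) * V) :=
          mul_le_mul_right (hvol k) _
      _ = K * S k ^ q := by
          have hE : ENNReal.ofReal ((2:ℝ)^(((k:ℝ)*σ)*q))
              * ENNReal.ofReal ((2:ℝ)^((k:ℝ)*(-(β*q))))
              * ENNReal.ofReal ((2:ℝ)^((k:ℝ)*(N:ℝ))) = 1 := by
            rw [ofReal_two_rpow_mul, ofReal_two_rpow_mul]
            have hz : ((k:ℝ)*σ)*q + (k:ℝ)*(-(β*q)) + (k:ℝ)*(N:ℝ) = 0 := by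
              linear_combination (k:ℝ) * key2
            rw [hz, Real.rpow_zero, ENNReal.ofReal_one]
          rw [hBdef, ENNReal.mul_rpow_of_nonneg _ _ hq0.le,
            ENNReal.mul_rpow_of_nonneg _ _ hq0.le,
            ofReal_two_rpow_rpow _ _ hq0.le, two_zpow_rpow,
            ENNReal.ofReal_mul (by positivity),
            ENNReal.ofReal_mul (by positivity), hKdef]
          calc W ^ q * ENNReal.ofReal ((2:ℝ)^(((k:ℝ)*σ)*q)) * S k ^ q
                * (ENNReal.ofReal ((2:ℝ)^(|(-(β*q))|))
                  * ENNReal.ofReal ((2:ℝ)^((k:ℝ)*(-(β*q)))))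
                * (ENNReal.ofReal ((2:ℝ)^((k:ℝ)*(N:ℝ))) * ENNReal.ofReal ((2:ℝ)^((N:ℝ))) * V)
              = (W ^ q * ENNReal.ofReal ((2:ℝ)^(|(-(β*q))|)) * ENNReal.ofReal ((2:ℝ)^((N:ℝ))) * V
                  * S k ^ q)
                * (ENNReal.ofReal ((2:ℝ)^(((k:ℝ)*σ)*q))
                  * ENNReal.ofReal ((2:ℝ)^((k:ℝ)*(-(β*q))))
                  * ENNReal.ofReal ((2:ℝ)^((k:ℝ)*(N:ℝ)))) := by ring
            _ = W ^ q * ENNReal.ofReal ((2:ℝ)^(|(-(β*q))|)) * ENNReal.ofReal ((2:ℝ)^((N:ℝ))) * V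
                  * S k ^ q := by rw [hE, mul_one]
            _ = W ^ q * ENNReal.ofReal ((2:ℝ)^(|(-(β*q))|)) * ENNReal.ofReal ((2:ℝ)^((N:ℝ))) * V
                  * S k ^ q := rfl
  have hsum_a : ∑' j : ℤ, a j ≤ R := by
    have hiu := lintegral_iUnion (μ := volume) hA_meas hdisj
      (fun x => ENNReal.ofReal (u x ^ p) * ENNReal.ofReal (‖x‖ ^ (α * p)))
    calc ∑' j : ℤ, a j
        = ∫⁻ x in ⋃ j : ℤ, A j, ENNReal.ofReal (u x ^ p) * ENNReal.ofReal (‖x‖ ^ (α * p)) :=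
          hiu.symm
      _ ≤ R := setLIntegral_le_lintegral _ _
  have htsum : ∑' k : ℤ, S k ^ q ≤ D * R ^ (q/p) := by
    refine le_trans (hdisc a) (mul_le_mul_right (ENNReal.rpow_le_rpow hsum_a (by positivity)) _)
  have hcoverU : (Set.univ : Set (EuclideanSpace ℝ (Fin N)))
      ⊆ {(0:EuclideanSpace ℝ (Fin N))} ∪ ⋃ k : ℤ, A k := by
    intro x _
    by_cases hx : x = 0
    · exact Or.inl (by simp [hx])
    · exact Or.inr (Set.mem_iUnion.2 (hcover x hx))
  have hTot : (∫⁻ x : EuclideanSpace ℝ (Fin N), (∫⁻ y in {y : EuclideanSpace ℝ (Fin N) | 2 * ‖x‖ ≤ ‖y‖},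
        ENNReal.ofReal (u y * ‖y‖ ^ (-lam))) ^ q * ENNReal.ofReal (‖x‖ ^ (-(β * q))))
      ≤ K * D * R ^ (q/p) := by
    calc (∫⁻ x : EuclideanSpace ℝ (Fin N), (∫⁻ y in {y : EuclideanSpace ℝ (Fin N) | 2 * ‖x‖ ≤ ‖y‖},
            ENNReal.ofReal (u y * ‖y‖ ^ (-lam))) ^ q * ENNReal.ofReal (‖x‖ ^ (-(β * q))))
        = ∫⁻ x in Set.univ, (∫⁻ y in {y : EuclideanSpace ℝ (Fin N) | 2 * ‖x‖ ≤ ‖y‖},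
            ENNReal.ofReal (u y * ‖y‖ ^ (-lam))) ^ q * ENNReal.ofReal (‖x‖ ^ (-(β * q))) :=
          (setLIntegral_univ _).symm
      _ ≤ ∫⁻ x in {(0:EuclideanSpace ℝ (Fin N))} ∪ ⋃ k : ℤ, A k,
            (∫⁻ y in {y : EuclideanSpace ℝ (Fin N) | 2 * ‖x‖ ≤ ‖y‖},
            ENNReal.ofReal (u y * ‖y‖ ^ (-lam))) ^ q * ENNReal.ofReal (‖x‖ ^ (-(β * q))) :=
          lintegral_mono_set hcoverU
      _ ≤ (∫⁻ x in {(0:EuclideanSpace ℝ (Fin N))},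
            (∫⁻ y in {y : EuclideanSpace ℝ (Fin N) | 2 * ‖x‖ ≤ ‖y‖},
            ENNReal.ofReal (u y * ‖y‖ ^ (-lam))) ^ q * ENNReal.ofReal (‖x‖ ^ (-(β * q))))
          + ∫⁻ x in ⋃ k : ℤ, A k,
            (∫⁻ y in {y : EuclideanSpace ℝ (Fin N) | 2 * ‖x‖ ≤ ‖y‖},
            ENNReal.ofReal (u y * ‖y‖ ^ (-lam))) ^ q * ENNReal.ofReal (‖x‖ ^ (-(β * q))) :=
          lintegral_union_le _ _ _
      _ = ∫⁻ x in ⋃ k : ℤ, A k,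
            (∫⁻ y in {y : EuclideanSpace ℝ (Fin N) | 2 * ‖x‖ ≤ ‖y‖},
            ENNReal.ofReal (u y * ‖y‖ ^ (-lam))) ^ q * ENNReal.ofReal (‖x‖ ^ (-(β * q))) := by
          rw [setLIntegral_measure_zero _ _ hzero, zero_add]
      _ ≤ ∑' k : ℤ, ∫⁻ x in A k,
            (∫⁻ y in {y : EuclideanSpace ℝ (Fin N) | 2 * ‖x‖ ≤ ‖y‖},
            ENNReal.ofReal (u y * ‖y‖ ^ (-lam))) ^ q * ENNReal.ofReal (‖x‖ ^ (-(β * q))) :=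
          lintegral_iUnion_le _ _
      _ ≤ ∑' k : ℤ, K * S k ^ q := ENNReal.tsum_le_tsum fun k => hFK k
      _ = K * ∑' k : ℤ, S k ^ q := ENNReal.tsum_mul_left
      _ ≤ K * (D * R ^ (q/p)) := mul_le_mul_right htsum _
      _ = K * D * R ^ (q/p) := by ring
  calc (∫⁻ x : EuclideanSpace ℝ (Fin N), (∫⁻ y in {y : EuclideanSpace ℝ (Fin N) | 2 * ‖x‖ ≤ ‖y‖},
          ENNReal.ofReal (u y * ‖y‖ ^ (-lam))) ^ q * ENNReal.ofReal (‖x‖ ^ (-(β * q)))) ^ (1/q)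
      ≤ (K * D * R ^ (q/p)) ^ (1/q) := ENNReal.rpow_le_rpow hTot (by positivity)
    _ = (K*D)^(1/q) * R ^ (1/p) := by
        rw [ENNReal.mul_rpow_of_nonneg _ _ (by positivity), ← ENNReal.rpow_mul]
        congr 1
        rw [show q / p * (1/q) = q / (p*q) by ring]
        congr 1
        rw [div_eq_div_iff (by positivity) (by positivity)]
        ring
    _ ≤ ENNReal.ofReal (((K*D)^(1/q)).toReal + 1) * R ^ (1/p) := by
        refine mul_le_mul_left ?_ _
        conv_lhs => rw [← ENNReal.ofReal_toReal hKD]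
        have hnn : (0:ℝ) ≤ ((K*D)^(1/q)).toReal := ENNReal.toReal_nonneg
        exact ENNReal.ofReal_le_ofReal (by linarith)
end
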